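/- arXiv:math/9507211 — 2 statements merged into one kernel-verified Lean document; each statement's English description precedes it below -/
import Mathlib

section
/- Let α ≥ 3 be a cardinal, let θ be an infinite cardinal, and let λ be a cardinal with cf(2^θ) ≤ λ < 2^θ and θ < λ. Then there is no family F of at most 2^θ graphs, each of cardinality λ, such that every K_α-free graph of cardinality λ embeds as an induced subgraph into some member of F; in particular, the complexity of the class of K_α-free graphs of cardinality λ is greater than 2^θ. -/
/-!
Fix `Θ` of cardinality `θ`. A graph `G` and a map `g : Θ → V(G)` determine the traces
`g⁻¹(N(v)) ⊆ Θ` of the vertices `v` of `G`, at most `λ` of them when `|G| = λ`. A family of at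
most `2^θ` graphs has at most `2^θ` such pairs `(G, g)`, and since `cf(2^θ) ≤ λ < 2^θ` a diagonal
argument yields `λ` subsets of `Θ` that are not all traces of a single pair. Their incidence graph
with `Θ` has cardinality `λ` and is bipartite, hence `K_α`-free; an induced embedding of it into
some `G` would make all of them traces of `G` and the image of `Θ`.
-/

universe u

open Cardinal

/-- `G` is `K_α`-free: there is no injective map from a type of cardinality `α` into
the vertices of `G` whose images are pairwise adjacent. -/
def KCliqueFree (α : Cardinal.{u}) {V : Type u} (G : SimpleGraph V) : Prop :=
  ¬ ∃ (ι : Type u) (f : ι → V), #ι = α ∧ Function.Injective f ∧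
      ∀ i j : ι, i ≠ j → G.Adj (f i) (f j)

/-- Enumerate `J` along the initial ordinal of `#X`; each initial segment of the enumeration
covers fewer than `#X` points of `X`, so picking a point outside it at each stage of a cofinal
sequence of length `cf #X` gives the set `S`. -/
theorem exists_not_subset_of_cof_le {X J : Type u} {lam : Cardinal.{u}} (hX : ℵ₀ ≤ #X)
    (hcf : (#X).ord.cof ≤ lam) (hlam : lam < #X) (hJ : #J ≤ #X) (T : J → Set X)
    (hT : ∀ j, #(T j) ≤ lam) :
    ∃ S : Set X, #S ≤ lam ∧ ∀ j, ¬ S ⊆ T j := by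
  let O := (#X).ord.ToType
  have hO : #O = #X := by rw [mk_toType, card_ord]
  obtain ⟨idx⟩ : Nonempty (J ↪ O) := by rw [← le_def, hO]; exact hJ
  let B (c : O) : Set X := ⋃ j ∈ idx ⁻¹' Set.Iic c, T j
  have hB (c : O) : #(B c) < #X := by
    have hIic : #(idx ⁻¹' Set.Iic c) < #X :=
      calc #(idx ⁻¹' Set.Iic c) ≤ #(Set.Iic c) := mk_preimage_of_injective _ _ idx.injective
        _ < #O := mk_Iic_lt c (by rw [hO, Ordinal.type_toType]) (hO ▸ hX)
        _ = #X := hO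
    calc #(B c) ≤ #(idx ⁻¹' Set.Iic c) * ⨆ j : idx ⁻¹' Set.Iic c, #(T j) := mk_biUnion_le _ _
      _ ≤ #(idx ⁻¹' Set.Iic c) * lam := by gcongr; exact ciSup_le' fun j => hT j
      _ < #X := mul_lt_of_lt hX hIic hlam
  have hBc (c : O) : (B c)ᶜ.Nonempty :=
    Set.nonempty_compl.2 fun h => (hB c).ne (by rw [h, mk_univ])
  choose s hs using hBc
  obtain ⟨C, hC, hCcard⟩ := Order.exists_cof_eq O
  refine ⟨s '' C, ?_, fun j hsub => ?_⟩
  · calc #(s '' C) ≤ #C := mk_image_le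
      _ = (#X).ord.cof := by rw [hCcard, Ordinal.cof_toType]
      _ ≤ lam := hcf
  · obtain ⟨c, hcC, hjc⟩ := hC (idx j)
    exact hs c (Set.mem_biUnion (x := j) hjc (hsub (Set.mem_image_of_mem s hcC)))

theorem mk_sigma_arrow_le_two_power {Θ ι : Type u} {V : ι → Type u} (hΘ : ℵ₀ ≤ #Θ)
    (hι : #ι ≤ 2 ^ #Θ) (hV : ∀ i, #(V i) ≤ 2 ^ #Θ) : #(Σ i, Θ → V i) ≤ 2 ^ #Θ := by
  have h_arrow (i : ι) : #(Θ → V i) ≤ 2 ^ #Θ :=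
    calc #(Θ → V i) = #(V i) ^ #Θ := (power_def _ _).symm
      _ ≤ (2 ^ #Θ) ^ #Θ := power_le_power_right (hV i)
      _ = 2 ^ #Θ := by rw [← power_mul, mul_eq_self hΘ]
  calc #(Σ i, Θ → V i) ≤ #ι * ⨆ i, #(Θ → V i) := by rw [mk_sigma]; exact sum_le_mk_mul_iSup _
    _ ≤ 2 ^ #Θ * 2 ^ #Θ := mul_le_mul' hι (ciSup_le' h_arrow)
    _ = 2 ^ #Θ := mul_eq_self (hΘ.trans (cantor _).le)

namespace SimpleGraph

variable {P L V : Type u}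

theorem CliqueFree.kCliqueFree {G : SimpleGraph V} {n : ℕ} {α : Cardinal.{u}}
    (hG : G.CliqueFree n) (hn : n ≤ α) : KCliqueFree α G := by
  rintro ⟨ι, f, rfl, hf, hadj⟩
  obtain ⟨e⟩ : Nonempty (Fin n ↪ ι) := by rwa [← lift_mk_le', mk_fin, lift_natCast, lift_id']
  exact (cliqueFree_iff.1 hG).false ⟨⟨f ∘ e, fun h => hadj _ _ (e.injective.ne h)⟩,
    hf.comp e.injective⟩

def incidenceGraph (N : L → Set P) : SimpleGraph (P ⊕ L) where
  Adj
    | .inl p, .inr a | .inr a, .inl p => p ∈ N a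
    | _, _ => False
  symm := ⟨by rintro (p | a) (q | b) h <;> exact h⟩
  loopless := ⟨by rintro (p | a) h <;> exact h⟩

theorem incidenceGraph_cliqueFree_three (N : L → Set P) : (incidenceGraph N).CliqueFree 3 :=
  have valid {x y : P ⊕ L} (h : (incidenceGraph N).Adj x y) : x.isLeft ≠ y.isLeft := by
    rcases x with p | a <;> rcases y with q | b <;> simp_all [incidenceGraph]
  (Coloring.mk Sum.isLeft valid).colorable.cliqueFree (by simp)

def neighborTraces {Θ : Type u} (G : SimpleGraph V) (g : Θ → V) : Set (Set Θ) :=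
  Set.range fun v => g ⁻¹' G.neighborSet v

theorem range_subset_neighborTraces {G : SimpleGraph V} {N : L → Set P}
    (f : incidenceGraph N ↪g G) : Set.range N ⊆ G.neighborTraces (f ∘ Sum.inl) := by
  rintro _ ⟨a, rfl⟩
  exact ⟨f (.inr a), Set.ext fun p => f.map_adj_iff⟩

end SimpleGraph

open SimpleGraph

/-- For a cardinal `α ≥ 3`, an infinite `θ`, and `λ` with `cf(2^θ) ≤ λ < 2^θ` and
`θ < λ`, there is no family of at most `2^θ` graphs, each of cardinality `λ`, embedding
(as induced subgraphs) all `K_α`-free graphs of cardinality `λ`; i.e. the complexity of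
the class of `K_α`-free graphs in power `λ` exceeds `2^θ`. -/
theorem stmt7 (α θ lam : Cardinal.{u}) (hα : 3 ≤ α) (hθ : ℵ₀ ≤ θ)
    (hcf : ((2 : Cardinal.{u}) ^ θ).ord.cof ≤ lam) (hlt : lam < 2 ^ θ) (hθlam : θ < lam) :
    ¬ ∃ (ι : Type u) (V : ι → Type u) (G : ∀ i, SimpleGraph (V i)),
        #ι ≤ 2 ^ θ ∧ (∀ i, #(V i) = lam) ∧
        ∀ (W : Type u) (H : SimpleGraph W), #W = lam → KCliqueFree α H →
          ∃ i, Nonempty (H ↪g G i) := by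
  rintro ⟨ι, V, G, hι, hV, huniv⟩
  induction θ using Cardinal.inductionOn with | mk Θ => ?_
  induction lam using Cardinal.inductionOn with | mk L => ?_
  have h2Θ : #(Set Θ) = 2 ^ #Θ := mk_set
  obtain ⟨S, hS, hSnot⟩ := exists_not_subset_of_cof_le (J := Σ i, Θ → V i)
    (h2Θ ▸ hθ.trans (cantor _).le) (h2Θ ▸ hcf) (h2Θ ▸ hlt)
    (h2Θ ▸ mk_sigma_arrow_le_two_power hθ hι fun i => (hV i).trans_le hlt.le)
    (fun j => (G j.1).neighborTraces j.2) fun j => mk_range_le.trans (hV j.1).le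
  obtain ⟨e⟩ : Nonempty (S ↪ L) := le_def _ _ |>.1 hS
  obtain ⟨N, hN⟩ : ∃ N : L → Set Θ, S ⊆ Set.range N :=
    ⟨Function.extend e Subtype.val fun _ => ∅,
      fun A hA => ⟨e ⟨A, hA⟩, e.injective.extend_apply _ _ _⟩⟩
  obtain ⟨i, ⟨f⟩⟩ := huniv (Θ ⊕ L) (incidenceGraph N)
    (by simpa using add_eq_right (hθ.trans hθlam.le) hθlam.le)
    ((incidenceGraph_cliqueFree_three N).kCliqueFree (by exact_mod_cast hα))
  exact hSnot ⟨i, f ∘ Sum.inl⟩ (hN.trans (range_subset_neighborTraces f))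
end

section
/- Let θ ≤ α ≤ β be infinite cardinals with 2^{<θ} = θ, and let λ be a cardinal with cf(2^θ) ≤ λ < 2^θ and θ < λ. Then there is no universal K_{α,β}-free graph of cardinality λ; that is, there is no K_{α,β}-free graph G of cardinality λ such that every K_{α,β}-free graph of cardinality λ embeds as an induced subgraph into G. -/
/-!
The nodes of the tree `2^{<θ}` are the restrictions `f ↾ ξ` (`ξ < θ`) of branches `f : θ → 2`;
since `2^{<θ} = θ` there are at most `θ` of them, and two distinct branches share fewer than `θ`
nodes. So for every family `A` of branches the bipartite node–branch incidence graph is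
`K_{α,β}`-free: a side of a `K_{α,β}` containing a node consists of nodes lying on two distinct
branches.

If `G` of cardinality `λ` were universal, embedding such a graph with `|A| = λ` would give a map
`g` from the nodes into `G` along which the node set of every `f ∈ A` is the trace of a
neighbourhood in `G`. Each `g` has at most `λ` traces and there are at most `λ^θ ≤ 2^θ` maps `g`;
since `cf(2^θ) ≤ λ < 2^θ`, diagonalising along a cofinal subset of `2^θ` yields `λ` branches that
are not all traces for a single `g`.
-/

universe u

open Cardinal

/-- `G` is `K_{α,β}`-free: there are no sets `S`, `T` of vertices with `|S| = α`,
`|T| = β` and every vertex of `S` adjacent to every vertex of `T`. -/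
def KBipartiteFree (α β : Cardinal.{u}) {V : Type u} (G : SimpleGraph V) : Prop :=
  ¬ ∃ S T : Set V, #S = α ∧ #T = β ∧ ∀ s ∈ S, ∀ t ∈ T, G.Adj s t

/-- The tree `2^{<ι}`: a node of level `ξ` is a function `Iio ξ → Prop`. -/
def TreeNode (ι : Type u) [Preorder ι] : Type u := Σ ξ : ι, (Set.Iio ξ → Prop)

namespace TreeNode

variable {ι : Type u} [Preorder ι]

def ofBranch (f : ι → Prop) (ξ : ι) : TreeNode ι := ⟨ξ, fun y => f y⟩

theorem ofBranch_eq_ofBranch {f g : ι → Prop} {ξ η : ι}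
    (h : ofBranch f ξ = ofBranch g η) : ξ = η ∧ ∀ y < ξ, f y = g y := by
  obtain rfl : ξ = η := congrArg Sigma.fst h
  exact ⟨rfl, fun y hy => congrFun (eq_of_heq (Sigma.mk.inj_iff.mp h).2) ⟨y, hy⟩⟩

end TreeNode

open TreeNode

def branchNodes {ι : Type u} [Preorder ι] (f : ι → Prop) : Set (TreeNode ι) := Set.range (ofBranch f)

theorem branchNodes_injective {ι : Type u} [Preorder ι] [NoMaxOrder ι] :
    Function.Injective (branchNodes (ι := ι)) := by
  intro f g h
  funext x
  obtain ⟨ξ, hxξ⟩ := exists_gt x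
  obtain ⟨η, hη⟩ : ofBranch f ξ ∈ branchNodes g := h ▸ Set.mem_range_self ξ
  obtain ⟨rfl, hfg⟩ := ofBranch_eq_ofBranch hη
  exact (hfg x hxξ).symm

theorem branchNodes_inter_subset {ι : Type u} [LinearOrder ι] {f g : ι → Prop} {ξ : ι}
    (hξ : f ξ ≠ g ξ) : branchNodes f ∩ branchNodes g ⊆ ofBranch f '' Set.Iic ξ := by
  rintro _ ⟨⟨η, rfl⟩, ⟨η', hη'⟩⟩
  obtain ⟨rfl, hfg⟩ := ofBranch_eq_ofBranch hη'.symm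
  refine ⟨η, not_lt.mp fun hξη => hξ ?_, rfl⟩
  exact hfg ξ hξη

theorem Cardinal.mk_Iic_toType_ord_lt {c : Cardinal.{u}} (hc : ℵ₀ ≤ c) (x : c.ord.ToType) :
    #(Set.Iic x) < c := by
  have := Cardinal.noMaxOrder hc
  obtain ⟨y, hxy⟩ := exists_gt x
  calc #(Set.Iic x) ≤ #(Set.Iio y) := mk_le_mk_of_subset fun z hz => lt_of_le_of_lt hz hxy
    _ < c := by simpa using mk_Iio_lt y

theorem mk_branchNodes_inter_lt {θ : Cardinal.{u}} (hθ : ℵ₀ ≤ θ) {f g : θ.ord.ToType → Prop}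
    (hfg : f ≠ g) : #(branchNodes f ∩ branchNodes g : Set _) < θ := by
  obtain ⟨ξ, hξ⟩ := Function.ne_iff.mp hfg
  calc #(branchNodes f ∩ branchNodes g : Set _) ≤ #(ofBranch f '' Set.Iic ξ) :=
        mk_le_mk_of_subset (branchNodes_inter_subset hξ)
    _ ≤ #(Set.Iic ξ) := mk_image_le
    _ < θ := mk_Iic_toType_ord_lt hθ ξ

theorem mk_treeNode_le {θ : Cardinal.{u}} (hθ : ℵ₀ ≤ θ) (hpow : (2 : Cardinal.{u}) ^< θ = θ) :
    #(TreeNode θ.ord.ToType) ≤ θ := by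
  rw [TreeNode, mk_sigma]
  calc (sum fun ξ : θ.ord.ToType => #(Set.Iio ξ → Prop))
      ≤ sum fun _ : θ.ord.ToType => θ := sum_le_sum _ _ fun ξ => by
        simpa [hpow] using le_powerlt 2 (by simpa using mk_Iio_lt ξ : #(Set.Iio ξ) < θ)
    _ = θ := by rw [sum_const', mk_ord_toType, mul_eq_self hθ]

def incidenceGraph {P B : Type*} (r : P → B → Prop) : SimpleGraph (P ⊕ B) where
  Adj
    | .inl p, .inr b => r p b
    | .inr b, .inl p => r p b
    | _, _ => False
  symm := ⟨by rintro (p | b) (p' | b') h <;> exact h⟩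
  loopless := ⟨by rintro (p | b) h <;> exact h⟩

namespace incidenceGraph

variable {P B : Type u} {r : P → B → Prop}

theorem mk_lt_of_forall_adj {θ : Cardinal.{u}}
    (hr : ∀ b₁ b₂, b₁ ≠ b₂ → #{p | r p b₁ ∧ r p b₂} < θ) {S T : Set (P ⊕ B)}
    (hST : ∀ s ∈ S, ∀ t ∈ T, (incidenceGraph r).Adj s t) {p : P} (hp : .inl p ∈ S)
    (hT : 1 < #T) : #S < θ := by
  have hT_blocks : ∀ t ∈ T, ∃ b, t = .inr b := by
    rintro (q | b) ht
    · exact (hST _ hp _ ht).elim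
    · exact ⟨b, rfl⟩
  obtain ⟨t₁, ht₁, t₂, ht₂, hne⟩ := Set.nontrivial_coe_sort.mp (one_lt_iff_nontrivial.mp hT)
  obtain ⟨b₁, rfl⟩ := hT_blocks t₁ ht₁
  obtain ⟨b₂, rfl⟩ := hT_blocks t₂ ht₂
  have hS : S ⊆ .inl '' {p | r p b₁ ∧ r p b₂} := by
    rintro (q | b) hs
    · exact ⟨q, ⟨hST _ hs _ ht₁, hST _ hs _ ht₂⟩, rfl⟩
    · exact (hST _ hs _ ht₁).elim
  calc #S ≤ #(.inl '' {p | r p b₁ ∧ r p b₂} : Set (P ⊕ B)) := mk_le_mk_of_subset hS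
    _ ≤ #{p | r p b₁ ∧ r p b₂} := mk_image_le
    _ < θ := hr b₁ b₂ (fun h => hne (congrArg _ h))

theorem kBipartiteFree {θ α β : Cardinal.{u}} (hθ : 1 < θ) (hα : θ ≤ α) (hβ : θ ≤ β)
    (hr : ∀ b₁ b₂, b₁ ≠ b₂ → #{p | r p b₁ ∧ r p b₂} < θ) :
    KBipartiteFree α β (incidenceGraph r) := by
  rintro ⟨S, T, rfl, rfl, hST⟩
  obtain ⟨s, hs⟩ : S.Nonempty := by
    rw [← Set.nonempty_coe_sort, ← mk_ne_zero_iff]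
    exact (zero_lt_one.trans (hθ.trans_le hα)).ne'
  obtain ⟨t, ht⟩ : T.Nonempty := by
    rw [← Set.nonempty_coe_sort, ← mk_ne_zero_iff]
    exact (zero_lt_one.trans (hθ.trans_le hβ)).ne'
  rcases s with p | b
  · exact (mk_lt_of_forall_adj hr hST hs (hθ.trans_le hβ)).not_ge hα
  · rcases t with p | b'
    · exact (mk_lt_of_forall_adj hr (fun t ht s hs => (hST s hs t ht).symm) ht
        (hθ.trans_le hα)).not_ge hβ
    · exact (hST _ hs _ ht).elim

theorem preimage_neighborSet {V : Type*} {G : SimpleGraph V} (φ : incidenceGraph r ↪g G)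
    (b : B) : (φ ∘ .inl) ⁻¹' G.neighborSet (φ (.inr b)) = {p | r p b} := by
  ext p
  exact φ.map_adj_iff

end incidenceGraph

theorem exists_set_forall_not_subset_of_cof_le {X I : Type u} {κ lam : Cardinal.{u}}
    (hκ : ℵ₀ ≤ κ) (hX : #X = κ) (hI : #I ≤ κ) (C : I → Set X) (hC : ∀ i, #(C i) ≤ lam)
    (hlt : lam < κ) (hcf : κ.ord.cof ≤ lam) : ∃ A : Set X, #A ≤ lam ∧ ∀ i, ¬ A ⊆ C i := by
  obtain ⟨e⟩ : Nonempty (I ↪ κ.ord.ToType) := by rwa [← le_def, mk_ord_toType]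
  set U : κ.ord.ToType → Set X := fun x => ⋃ i : {i // e i ≤ x}, C i
  have hU : ∀ x, #(U x) < κ := fun x => calc
    #(U x) ≤ #{i // e i ≤ x} * ⨆ i : {i // e i ≤ x}, #(C i) := mk_iUnion_le _
    _ ≤ #(Set.Iic x) * lam := by
      gcongr
      · exact mk_le_of_injective (f := fun i => (⟨e i, i.2⟩ : Set.Iic x))
          fun i j h => Subtype.ext (e.injective (congrArg Subtype.val h))
      · exact ciSup_le' fun i => hC i
    _ < κ := mul_lt_of_lt hκ (mk_Iic_toType_ord_lt hκ x) hlt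
  have hUc : ∀ x, (U x)ᶜ.Nonempty := fun x => by
    rw [Set.nonempty_compl]
    intro h
    simpa [h, hX] using hU x
  -- `a x` avoids every `C i` with `e i ≤ x`, and a cofinal set reaches every `e i`.
  choose a ha using hUc
  obtain ⟨S, hS, hSκ⟩ := Order.exists_cof_eq κ.ord.ToType
  rw [Ordinal.cof_toType] at hSκ
  refine ⟨a '' S, mk_image_le.trans (hSκ.trans_le hcf), fun i hi => ?_⟩
  obtain ⟨x, hxS, hix⟩ := hS (e i)
  exact ha x (Set.mem_iUnion.mpr ⟨⟨i, hix⟩, hi (Set.mem_image_of_mem a hxS)⟩)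

theorem Cardinal.exists_superset_mk_eq {X : Type u} {A : Set X} {c : Cardinal.{u}} (hc : ℵ₀ ≤ c)
    (hA : #A ≤ c) (hcX : c ≤ #X) : ∃ B : Set X, A ⊆ B ∧ #B = c := by
  obtain ⟨B, hB⟩ := le_mk_iff_exists_set.mp hcX
  refine ⟨A ∪ B, Set.subset_union_left, le_antisymm ?_ ?_⟩
  · calc #(A ∪ B : Set X) ≤ #A + #B := mk_union_le A B
      _ ≤ c := by rw [hB]; exact (add_le_add_left hA c).trans (add_eq_self hc).le
  · exact hB ▸ mk_le_mk_of_subset Set.subset_union_right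

theorem exists_set_mk_eq_forall_not_subset_of_cof_le {X I : Type u} {κ lam : Cardinal.{u}}
    (hκ : ℵ₀ ≤ κ) (hX : #X = κ) (hI : #I ≤ κ) (C : I → Set X) (hC : ∀ i, #(C i) ≤ lam)
    (hlt : lam < κ) (hcf : κ.ord.cof ≤ lam) : ∃ A : Set X, #A = lam ∧ ∀ i, ¬ A ⊆ C i := by
  obtain ⟨A, hA, hAC⟩ := exists_set_forall_not_subset_of_cof_le hκ hX hI C hC hlt hcf
  have hlam : ℵ₀ ≤ lam :=
    (Ordinal.aleph0_le_cof_iff.mpr (Ordinal.one_lt_cof_iff.mpr (isSuccLimit_ord hκ))).trans hcf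
  obtain ⟨B, hAB, hB⟩ := exists_superset_mk_eq hlam hA (hX ▸ hlt.le)
  exact ⟨B, hB, fun i hBC => hAC i (hAB.trans hBC)⟩

/-- For infinite cardinals `θ ≤ α ≤ β` with `2^{<θ} = θ` and `λ` with
`cf(2^θ) ≤ λ < 2^θ` and `θ < λ`, there is no universal `K_{α,β}`-free graph of
cardinality `λ`. -/
theorem stmt13 (θ α β lam : Cardinal.{u}) (hθ : ℵ₀ ≤ θ) (hθα : θ ≤ α) (hαβ : α ≤ β)
    (hpow : (2 : Cardinal.{u}) ^< θ = θ)
    (hcf : ((2 : Cardinal.{u}) ^ θ).ord.cof ≤ lam) (hlt : lam < 2 ^ θ) (hθlam : θ < lam) :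
    ¬ ∃ (V : Type u) (G : SimpleGraph V), #V = lam ∧ KBipartiteFree α β G ∧
        ∀ (W : Type u) (H : SimpleGraph W), #W = lam → KBipartiteFree α β H →
          Nonempty (H ↪g G) := by
  rintro ⟨V, G, hV, -, huniv⟩
  have hlam : ℵ₀ ≤ lam := hθ.trans hθlam.le
  have := noMaxOrder hθ
  have hmaps : #(TreeNode θ.ord.ToType → V) ≤ 2 ^ θ := calc
    #(TreeNode θ.ord.ToType → V) = lam ^ #(TreeNode θ.ord.ToType) := by rw [← power_def, hV]
    _ ≤ lam ^ θ := power_le_power_left (aleph0_pos.trans_le hlam).ne' (mk_treeNode_le hθ hpow)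
    _ ≤ (2 ^ θ) ^ θ := power_le_power_right hlt.le
    _ = 2 ^ θ := by rw [← power_mul, mul_eq_self hθ]
  obtain ⟨A, hA, hAC⟩ := exists_set_mk_eq_forall_not_subset_of_cof_le (hθ.trans (cantor θ).le)
    (by simp) hmaps (fun g => branchNodes ⁻¹' Set.range fun w => g ⁻¹' G.neighborSet w)
    (fun g => (mk_preimage_of_injective _ _ branchNodes_injective).trans
      (mk_range_le.trans hV.le)) hlt hcf
  have hW : #(TreeNode θ.ord.ToType ⊕ A) = lam := by
    simpa [hA] using add_eq_right hlam ((mk_treeNode_le hθ hpow).trans hθlam.le)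
  obtain ⟨φ⟩ := huniv _ (incidenceGraph fun n (f : A) => n ∈ branchNodes f.1) hW
    (incidenceGraph.kBipartiteFree (one_lt_aleph0.trans_le hθ) hθα (hθα.trans hαβ)
      fun f₁ f₂ hne => mk_branchNodes_inter_lt hθ (Subtype.coe_ne_coe.mpr hne))
  exact hAC (φ ∘ .inl) fun f hf => ⟨φ (.inr ⟨f, hf⟩), incidenceGraph.preimage_neighborSet φ _⟩
end
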